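/- Let f : ℝⁿ → ℝ and G : ℝⁿ → S^m be twice continuously differentiable. If (x,Y,Λ) ∈ ℝⁿ × S^m × S^m is a KKT triple of (P2) such that Λ is positive semidefinite, then (x,Λ) is a KKT pair of (P1), i.e., ∇f(x) − DG(x)*Λ = 0, Λ is PSD, G(x) is PSD, and Λ∘G(x) = 0. -/

import Mathlib

open Matrix

noncomputable section

def jmul {m : ℕ} (A B : Matrix (Fin m) (Fin m) ℝ) : Matrix (Fin m) (Fin m) ℝ :=
  (1 / 2 : ℝ) • (A * B + B * A)

def minner {m : ℕ} (A B : Matrix (Fin m) (Fin m) ℝ) : ℝ :=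
  (A * B).trace

def memPhi {m : ℕ} (Λ Y : Matrix (Fin m) (Fin m) ℝ) : Prop :=
  ∀ W : Matrix (Fin m) (Fin m) ℝ, W.IsSymm → W ≠ 0 → jmul Y W = 0 →
    0 < minner (jmul W W) Λ

def pderivG {n m : ℕ} (G : (Fin n → ℝ) → Matrix (Fin m) (Fin m) ℝ)
    (x : Fin n → ℝ) (k : Fin n) : Matrix (Fin m) (Fin m) ℝ :=
  Matrix.of fun i j => fderiv ℝ (fun y => G y i j) x (Pi.single k 1)

def dirDerivG {n m : ℕ} (G : (Fin n → ℝ) → Matrix (Fin m) (Fin m) ℝ)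
    (x v : Fin n → ℝ) : Matrix (Fin m) (Fin m) ℝ :=
  ∑ k, v k • pderivG G x k

def adjDG {n m : ℕ} (G : (Fin n → ℝ) → Matrix (Fin m) (Fin m) ℝ)
    (x : Fin n → ℝ) (W : Matrix (Fin m) (Fin m) ℝ) : Fin n → ℝ :=
  fun k => minner (pderivG G x k) W

def gradf {n : ℕ} (f : (Fin n → ℝ) → ℝ) (x : Fin n → ℝ) : Fin n → ℝ :=
  fun k => fderiv ℝ f x (Pi.single k 1)

def KKT1 {n m : ℕ} (f : (Fin n → ℝ) → ℝ) (G : (Fin n → ℝ) → Matrix (Fin m) (Fin m) ℝ)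
    (x : Fin n → ℝ) (Λ : Matrix (Fin m) (Fin m) ℝ) : Prop :=
  gradf f x = adjDG G x Λ ∧ Λ.PosSemidef ∧ (G x).PosSemidef ∧ jmul Λ (G x) = 0

def KKT2 {n m : ℕ} (f : (Fin n → ℝ) → ℝ) (G : (Fin n → ℝ) → Matrix (Fin m) (Fin m) ℝ)
    (x : Fin n → ℝ) (Y Λ : Matrix (Fin m) (Fin m) ℝ) : Prop :=
  gradf f x = adjDG G x Λ ∧ jmul Λ Y = 0 ∧ G x = jmul Y Y

def hessQ {n m : ℕ} (f : (Fin n → ℝ) → ℝ) (G : (Fin n → ℝ) → Matrix (Fin m) (Fin m) ℝ)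
    (Λ : Matrix (Fin m) (Fin m) ℝ) (x v : Fin n → ℝ) : ℝ :=
  iteratedFDeriv ℝ 2 (fun y => f y - minner (G y) Λ) x ![v, v]

def SOSCNLP {n m : ℕ} (f : (Fin n → ℝ) → ℝ) (G : (Fin n → ℝ) → Matrix (Fin m) (Fin m) ℝ)
    (x : Fin n → ℝ) (Y Λ : Matrix (Fin m) (Fin m) ℝ) : Prop :=
  ∀ (v : Fin n → ℝ) (W : Matrix (Fin m) (Fin m) ℝ), W.IsSymm →
    ¬(v = 0 ∧ W = 0) → dirDerivG G x v = (2 : ℝ) • jmul Y W →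
    0 < hessQ f G Λ x v + 2 * minner (jmul W W) Λ

def SONCNLP {n m : ℕ} (f : (Fin n → ℝ) → ℝ) (G : (Fin n → ℝ) → Matrix (Fin m) (Fin m) ℝ)
    (x : Fin n → ℝ) (Y Λ : Matrix (Fin m) (Fin m) ℝ) : Prop :=
  ∀ (v : Fin n → ℝ) (W : Matrix (Fin m) (Fin m) ℝ), W.IsSymm →
    dirDerivG G x v = (2 : ℝ) • jmul Y W →
    0 ≤ hessQ f G Λ x v + 2 * minner (jmul W W) Λ

def LICQ {n m : ℕ} (G : (Fin n → ℝ) → Matrix (Fin m) (Fin m) ℝ)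
    (x : Fin n → ℝ) (Y : Matrix (Fin m) (Fin m) ℝ) : Prop :=
  ∀ W : Matrix (Fin m) (Fin m) ℝ, W.IsSymm → jmul Y W = 0 → adjDG G x W = 0 → W = 0

def Nondeg {n m : ℕ} (G : (Fin n → ℝ) → Matrix (Fin m) (Fin m) ℝ)
    (x : Fin n → ℝ) : Prop :=
  ∀ W : Matrix (Fin m) (Fin m) ℝ, W.IsSymm → G x * W = 0 → adjDG G x W = 0 → W = 0

def CritCone {n m : ℕ} (f : (Fin n → ℝ) → ℝ) (G : (Fin n → ℝ) → Matrix (Fin m) (Fin m) ℝ)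
    (x : Fin n → ℝ) : Set (Fin n → ℝ) :=
  {d | (∀ u : Fin m → ℝ, G x *ᵥ u = 0 → 0 ≤ u ⬝ᵥ (dirDerivG G x d *ᵥ u)) ∧
    gradf f x ⬝ᵥ d = 0}

def IsMPInv {m : ℕ} (A P : Matrix (Fin m) (Fin m) ℝ) : Prop :=
  A * P * A = A ∧ P * A * P = P ∧ (A * P)ᵀ = A * P ∧ (P * A)ᵀ = P * A

def Hmat {n m : ℕ} (G : (Fin n → ℝ) → Matrix (Fin m) (Fin m) ℝ)
    (x : Fin n → ℝ) (Λ P : Matrix (Fin m) (Fin m) ℝ) : Matrix (Fin n) (Fin n) ℝ :=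
  Matrix.of fun i j => 2 * (pderivG G x i * P * pderivG G x j * Λ).trace

/-! Write `G x = Y²`. If `Λ ⪰ 0` anticommutes with the symmetric `Y`, then
`Y Λ Y = -Λ Y²` has trace both `tr(Λ Y²)` and `-tr(Λ Y²)`, hence zero; with `Λ = Bᴴ B` this trace
is `‖B Y‖²_F`, so `B Y = 0` and `Λ Y = 0 = Y Λ`. Then `Λ ∘ G x = 0`, and `G x = Yᴴ Y ⪰ 0`. -/

namespace Matrix.PosSemidef

open scoped ComplexOrder MatrixOrder

theorem mul_eq_zero_of_anticommute {n 𝕜 : Type*} [Fintype n] [RCLike 𝕜]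
    {Λ Y : Matrix n n 𝕜} (hΛ : Λ.PosSemidef) (hY : Y.IsHermitian) (h : Λ * Y + Y * Λ = 0) :
    Λ * Y = 0 := by
  classical
  obtain ⟨B, rfl⟩ := CStarAlgebra.nonneg_iff_eq_star_mul_self.mp hΛ.nonneg
  set Λ := star B * B
  have hcyc : (Y * Λ * Y).trace = (Λ * Y * Y).trace := by
    rw [mul_assoc, trace_mul_comm]
  have hanti : Y * Λ * Y = -(Λ * Y * Y) := by
    rw [← neg_mul, ← eq_neg_of_add_eq_zero_right h]
  have htr : (Y * Λ * Y).trace = 0 := by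
    have := congrArg trace hanti
    rw [trace_neg, ← hcyc] at this
    exact CharZero.eq_neg_self_iff.mp this
  have hBY : B * Y = 0 := by
    rw [← trace_conjTranspose_mul_self_eq_zero_iff, conjTranspose_mul, hY.eq, ← htr]
    simp only [Λ, star_eq_conjTranspose, mul_assoc]
  rw [mul_assoc, hBY, mul_zero]

end Matrix.PosSemidef

theorem jmul_eq_zero_iff {m : ℕ} {A B : Matrix (Fin m) (Fin m) ℝ} :
    jmul A B = 0 ↔ A * B + B * A = 0 :=
  smul_eq_zero_iff_right (by norm_num)

theorem jmul_self {m : ℕ} (A : Matrix (Fin m) (Fin m) ℝ) : jmul A A = A * A := by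
  rw [jmul, ← two_smul ℝ, smul_smul]; norm_num

theorem stmt6_general {n m : ℕ} (f : (Fin n → ℝ) → ℝ) (G : (Fin n → ℝ) → Matrix (Fin m) (Fin m) ℝ)
    (x : Fin n → ℝ) (Y Λ : Matrix (Fin m) (Fin m) ℝ)
    (hY : Y.IsSymm) (hΛ : Λ.PosSemidef) (hKKT : KKT2 f G x Y Λ) :
    KKT1 f G x Λ := by
  obtain ⟨hstat, hcompl, hfeas⟩ := hKKT
  have hYh : Y.IsHermitian := isHermitian_iff_isSymm.mpr hY
  have hanti := jmul_eq_zero_iff.mp hcompl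
  have hΛY : Λ * Y = 0 := hΛ.mul_eq_zero_of_anticommute hYh hanti
  have hYΛ : Y * Λ = 0 := by rwa [hΛY, zero_add] at hanti
  rw [jmul_self] at hfeas
  refine ⟨hstat, hΛ, ?_, jmul_eq_zero_iff.mpr ?_⟩
  · simpa only [hfeas, hYh.eq] using posSemidef_conjTranspose_mul_self Y
  · rw [hfeas, ← mul_assoc, hΛY, zero_mul, mul_assoc, hYΛ, mul_zero, add_zero]

theorem stmt6 {n m : ℕ} (f : (Fin n → ℝ) → ℝ) (G : (Fin n → ℝ) → Matrix (Fin m) (Fin m) ℝ)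
    (hf : ContDiff ℝ 2 f) (hG : ∀ i j, ContDiff ℝ 2 fun y => G y i j)
    (x : Fin n → ℝ) (Y Λ : Matrix (Fin m) (Fin m) ℝ)
    (hY : Y.IsSymm) (hΛ : Λ.PosSemidef) (hKKT : KKT2 f G x Y Λ) :
    KKT1 f G x Λ :=
  stmt6_general f G x Y Λ hY hΛ hKKT
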